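/- arXiv:1402.0133 — 7 statements merged into one kernel-verified Lean document; each statement's English description precedes it below -/
import Mathlib

section
/- The double integral ∫₀¹∫₀¹ 1/((1+xy)(1+x)(1+y)) dx dy equals π²/24. -/
/-!
For fixed `x`, partial fractions in `y` give the inner integral
`log (2 / (1 + x)) / (1 - x ^ 2)`. The substitution `x = (1 - t) / (1 + t)`, an involution
of `(0, 1)`, turns its integral into `(1 / 2) ∫₀¹ log (1 + t) / t dt`. Expanding
`log (1 + t) / t` in its power series and integrating termwise gives
`∑ (-1) ^ n / (n + 1) ^ 2 = π ^ 2 / 12`.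
-/

open Real MeasureTheory Set

theorem hasSum_neg_one_pow_div_succ_sq :
    HasSum (fun n : ℕ => (-1 : ℝ) ^ n / ((n : ℝ) + 1) ^ 2) (π ^ 2 / 12) := by
  -- `∑ cos (2π n x) / n ^ 2` at `x = 1 / 2`, where `B₂(1 / 2) = -1 / 12`
  have h := hasSum_one_div_nat_pow_mul_cos one_ne_zero (x := 1 / 2) ⟨by norm_num, by norm_num⟩
  rw [← bernoulliFun, mul_one, bernoulliFun_two] at h
  have h' := ((hasSum_nat_add_iff' 1).2 h).neg
  norm_num [Nat.factorial] at h'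
  have hterm (n : ℕ) : -(((n + 1 : ℝ) ^ 2)⁻¹ * cos (2 * π * (n + 1) * (1 / 2)))
      = (-1) ^ n / ((n : ℝ) + 1) ^ 2 := by
    rw [show 2 * π * (n + 1) * (1 / 2) = ((n + 1 : ℕ) : ℝ) * π by push_cast; ring,
      cos_nat_mul_pi]
    ring
  rwa [funext hterm, show (2 * π) ^ 2 / 2 / 2 * (1 / 12) = π ^ 2 / 12 by ring] at h'

theorem hasSum_log_one_add_div_self {t : ℝ} (ht0 : t ≠ 0) (ht : |t| < 1) :
    HasSum (fun n : ℕ => (-1) ^ n / ((n : ℝ) + 1) * t ^ n) (log (1 + t) / t) := by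
  have h := (hasSum_pow_div_log_of_abs_lt_one (x := -t) (by rwa [abs_neg])).div_const (-t)
  have hterm (n : ℕ) :
      (-t) ^ (n + 1) / ((n : ℝ) + 1) / -t = (-1) ^ n / ((n : ℝ) + 1) * t ^ n := by
    rw [pow_succ, neg_pow]
    field_simp
  rwa [funext hterm, sub_neg_eq_add, neg_div_neg_eq] at h

theorem integral_Ioo_zero_one_pow (n : ℕ) :
    ∫ t in Ioo (0 : ℝ) 1, t ^ n = 1 / ((n : ℝ) + 1) := by
  rw [← integral_Ioc_eq_integral_Ioo, ← intervalIntegral.integral_of_le zero_le_one,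
    integral_pow]
  simp

theorem integral_log_one_add_div_self :
    ∫ t in Ioo (0 : ℝ) 1, log (1 + t) / t = π ^ 2 / 12 := by
  set F : ℕ → ℝ → ℝ := fun n t => (-1) ^ n / ((n : ℝ) + 1) * t ^ n
  have hF_int (n : ℕ) : Integrable (F n) (volume.restrict (Ioo 0 1)) :=
    (continuous_const.mul (continuous_pow n)).integrableOn_Icc.mono_set Ioo_subset_Icc_self
  have hF_norm (n : ℕ) : ∫ t in Ioo (0 : ℝ) 1, ‖F n t‖ = 1 / ((n : ℝ) + 1) ^ 2 := by
    rw [setIntegral_congr_fun measurableSet_Ioo (g := fun t => 1 / ((n : ℝ) + 1) * t ^ n)]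
    · rw [integral_const_mul, integral_Ioo_zero_one_pow, one_div_mul_one_div, sq]
    · intro t ht
      simp [F, abs_of_pos ht.1, abs_of_pos (by positivity : (0 : ℝ) < n + 1)]
  have hF_sum : Summable fun n => ∫ t in Ioo (0 : ℝ) 1, ‖F n t‖ := by
    simp_rw [hF_norm]
    exact_mod_cast (summable_nat_add_iff 1).2 (Real.summable_one_div_nat_pow.2 one_lt_two)
  calc ∫ t in Ioo (0 : ℝ) 1, log (1 + t) / t
      = ∫ t in Ioo (0 : ℝ) 1, ∑' n, F n t :=
        setIntegral_congr_fun measurableSet_Ioo fun t ht =>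
          (hasSum_log_one_add_div_self ht.1.ne' (by rw [abs_of_pos ht.1]; exact ht.2)).tsum_eq.symm
    _ = ∑' n, ∫ t in Ioo (0 : ℝ) 1, F n t :=
        (integral_tsum_of_summable_integral_norm hF_int hF_sum).symm
    _ = ∑' n : ℕ, (-1 : ℝ) ^ n / ((n : ℝ) + 1) ^ 2 := by
        congr 1 with n
        rw [integral_const_mul, integral_Ioo_zero_one_pow]
        field_simp
    _ = π ^ 2 / 12 := hasSum_neg_one_pow_div_succ_sq.tsum_eq

theorem bijOn_cayley : BijOn (fun t : ℝ => (1 - t) / (1 + t)) (Ioo 0 1) (Ioo 0 1) := by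
  have hmaps : MapsTo (fun t : ℝ => (1 - t) / (1 + t)) (Ioo 0 1) (Ioo 0 1) :=
    fun t ⟨h0, h1⟩ =>
      ⟨div_pos (by linarith) (by linarith), (div_lt_one (by linarith)).2 (by linarith)⟩
  have hinv : LeftInvOn (fun t : ℝ => (1 - t) / (1 + t)) (fun t => (1 - t) / (1 + t)) (Ioo 0 1) :=
    fun t ⟨h0, _⟩ => by
      have : (1 : ℝ) + t ≠ 0 := by linarith
      field_simp
      ring
  exact InvOn.bijOn ⟨hinv, hinv⟩ hmaps hmaps

theorem integral_Ioo_zero_one_comp_cayley {E : Type*} [NormedAddCommGroup E] [NormedSpace ℝ E]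
    (g : ℝ → E) :
    ∫ x in Ioo (0 : ℝ) 1, g x
      = ∫ t in Ioo (0 : ℝ) 1, (2 / (1 + t) ^ 2) • g ((1 - t) / (1 + t)) := by
  have hderiv (t : ℝ) (ht : t ∈ Ioo (0 : ℝ) 1) :
      HasDerivWithinAt (fun t : ℝ => (1 - t) / (1 + t)) (-2 / (1 + t) ^ 2) (Ioo 0 1) t := by
    have : (1 : ℝ) + t ≠ 0 := by linarith [ht.1]
    have h : HasDerivAt (fun t : ℝ => (1 - t) / (1 + t))
        ((-1 * (1 + t) - (1 - t) * 1) / (1 + t) ^ 2) t :=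
      ((hasDerivAt_id' t).const_sub 1).div ((hasDerivAt_id' t).const_add 1) this
    rw [show -1 * (1 + t) - (1 - t) * 1 = -2 by ring] at h
    exact h.hasDerivWithinAt
  conv_lhs => rw [← bijOn_cayley.image_eq]
  rw [integral_image_eq_integral_abs_deriv_smul measurableSet_Ioo hderiv bijOn_cayley.injOn]
  refine setIntegral_congr_fun measurableSet_Ioo fun t ht => ?_
  rw [abs_div, abs_neg, abs_two, abs_of_pos (by have := ht.1; positivity)]

theorem one_add_mul_pos {x y : ℝ} (hx : -1 < x) (hy : y ∈ Icc (0 : ℝ) 1) : 0 < 1 + x * y := by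
  obtain ⟨hy0, hy1⟩ := hy
  rcases le_or_gt 0 x with h | h <;> nlinarith

theorem integral_one_div_one_add_mul_one_add_one_add {x : ℝ} (hx : -1 < x) (hx1 : x ≠ 1) :
    ∫ y in (0 : ℝ)..1, 1 / ((1 + x * y) * (1 + x) * (1 + y))
      = log (2 / (1 + x)) / (1 - x ^ 2) := by
  have h1x : 1 + x ≠ 0 := by linarith
  have hx2 : 1 - x ^ 2 = (1 - x) * (1 + x) := by ring
  have hpos (y : ℝ) (hy : y ∈ uIcc 0 1) : 1 + y ≠ 0 ∧ 1 + x * y ≠ 0 := by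
    rw [uIcc_of_le zero_le_one] at hy
    exact ⟨by linarith [hy.1], (one_add_mul_pos hx hy).ne'⟩
  have hderiv (y : ℝ) (hy : y ∈ uIcc 0 1) :
      HasDerivAt (fun y => (log (1 + y) - log (1 + x * y)) / (1 - x ^ 2))
        (1 / ((1 + x * y) * (1 + x) * (1 + y))) y := by
    obtain ⟨h1y, h1xy⟩ := hpos y hy
    refine (((((hasDerivAt_id' y).const_add 1).log h1y).sub
      ((((hasDerivAt_id' y).const_mul x).const_add 1).log h1xy)).div_const _).congr_deriv ?_
    have : 1 - x ≠ 0 := sub_ne_zero.2 hx1.symm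
    rw [hx2, div_sub_div _ _ h1y h1xy, div_div, div_eq_div_iff (by simp [*]) (by simp [*])]
    ring
  have hcont : ContinuousOn (fun y => 1 / ((1 + x * y) * (1 + x) * (1 + y))) (uIcc 0 1) :=
    continuousOn_const.div (by fun_prop) fun y hy => by simp [h1x, hpos y hy]
  rw [intervalIntegral.integral_eq_sub_of_hasDerivAt hderiv hcont.intervalIntegrable,
    log_div two_ne_zero h1x]
  norm_num

theorem integral_log_two_div_one_add_div_one_sub_sq :
    ∫ x in Ioo (0 : ℝ) 1, log (2 / (1 + x)) / (1 - x ^ 2) = π ^ 2 / 24 := by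
  calc _ = ∫ t in Ioo (0 : ℝ) 1, 1 / 2 * (log (1 + t) / t) := by
        rw [integral_Ioo_zero_one_comp_cayley]
        refine setIntegral_congr_fun measurableSet_Ioo fun t ⟨ht0, _⟩ => ?_
        have ht : t ≠ 0 := ht0.ne'
        have h1t : 1 + t ≠ 0 := by linarith
        rw [show 2 / (1 + (1 - t) / (1 + t)) = 1 + t by field_simp; ring,
          show 1 - ((1 - t) / (1 + t)) ^ 2 = 4 * t / (1 + t) ^ 2 by field_simp; ring, smul_eq_mul]
        field_simp
        ring
    _ = π ^ 2 / 24 := by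
        rw [integral_const_mul, integral_log_one_add_div_self]
        ring

theorem stmt_2 :
    (∫ x in (0:ℝ)..1, ∫ y in (0:ℝ)..1, 1 / ((1 + x * y) * (1 + x) * (1 + y)))
      = Real.pi ^ 2 / 24 := by
  rw [intervalIntegral.integral_congr_Ioo_of_le zero_le_one fun x hx =>
      integral_one_div_one_add_mul_one_add_one_add (by linarith [hx.1]) hx.2.ne,
    intervalIntegral.integral_of_le zero_le_one, integral_Ioc_eq_integral_Ioo,
    integral_log_two_div_one_add_div_one_sub_sq]
end

section
/- The series ∑_{n=0}^∞ (-1)^n (∑_{k=1}^∞ (-1)^(k-1)/(n+k))² converges to π²/24. -/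
/-!
Write `g n` for the `n`-th tail. Peeling off its first term gives
`g n + g (n + 1) = 1 / (n + 1)`, and the alternating series bounds give `0 ≤ g n ≤ 1 / (n + 1)`.
Summation by parts along this recursion writes `2 ∑_{n<N} (-1)ⁿ (g n)²` as `(g 0)²`, boundary
terms tending to `0`, twice the alternating Euler sum `∑ (-1)ⁿ Hₙ / (n + 1)`, and
`∑ (-1)ⁿ / (n + 1)² = π² / 12`. Abel's limit theorem for the power series of `log (1 + x)` and
of its Cauchy square gives `g 0 = log 2` and `∑ (-1)ⁿ Hₙ / (n + 1) = -(log 2)² / 2`, so the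
`log 2` terms cancel; the alternating series test supplies the convergence that this
Tauberian use of Abel's theorem needs.
-/

open Filter Finset Topology

theorem antitone_one_div_add_one : Antitone fun m : ℕ => 1 / ((m : ℝ) + 1) :=
  fun _ _ h => by dsimp only; gcongr

theorem Antitone.mem_Icc_of_tendsto_alternating_series {f : ℕ → ℝ} {l : ℝ} (hf : Antitone f)
    (hl : Tendsto (fun n => ∑ i ∈ range n, (-1) ^ i * f i) atTop (𝓝 l)) :
    l ∈ Set.Icc 0 (f 0) :=
  ⟨by simpa using hf.alternating_series_le_tendsto hl 0,
    by simpa using hf.tendsto_le_alternating_series hl 0⟩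

theorem alternating_tail_add_tail_succ {f : ℕ → ℝ} {a b : ℝ} (n : ℕ)
    (ha : Tendsto (fun K => ∑ k ∈ range K, (-1) ^ k * f (n + k)) atTop (𝓝 a))
    (hb : Tendsto (fun K => ∑ k ∈ range K, (-1) ^ k * f (n + 1 + k)) atTop (𝓝 b)) :
    a + b = f n := by
  have hpeel : ∀ K, ∑ k ∈ range (K + 1), (-1) ^ k * f (n + k)
      = f n - ∑ k ∈ range K, (-1) ^ k * f (n + 1 + k) := fun K => by
    simp [sum_range_succ', pow_succ, add_right_comm n _ 1, ← add_assoc, sub_eq_neg_add]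
  have ha' : Tendsto (fun K => f n - ∑ k ∈ range K, (-1) ^ k * f (n + 1 + k)) atTop (𝓝 a) :=
    ((tendsto_add_atTop_iff_nat 1).2 ha).congr hpeel
  rw [tendsto_nhds_unique ha' (hb.const_sub (f n)), sub_add_cancel]

theorem tendsto_neg_one_pow_mul_of_tendsto_zero {u : ℕ → ℝ} (hu : Tendsto u atTop (𝓝 0)) :
    Tendsto (fun n => (-1) ^ n * u n) atTop (𝓝 0) :=
  squeeze_zero_norm (a := fun n => ‖u n‖) (fun n => by simp) (by simpa using hu.norm)

theorem Antitone.tendsto_alternating_series_of_hasSum_powerSeries {b : ℕ → ℝ} {F : ℝ → ℝ}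
    {V : ℝ} (hb : Antitone b) (hb0 : Tendsto b atTop (𝓝 0))
    (hF : ∀ x ∈ Set.Ioo (0 : ℝ) 1, HasSum (fun n => (-1) ^ n * b n * x ^ n) (F x))
    (hV : Tendsto F (𝓝[<] 1) (𝓝 V)) :
    Tendsto (fun N => ∑ n ∈ range N, (-1) ^ n * b n) atTop (𝓝 V) := by
  obtain ⟨l, hl⟩ := hb.tendsto_alternating_series_of_tendsto_zero hb0
  have habel : Tendsto F (𝓝[<] 1) (𝓝 l) := by
    refine (Real.tendsto_tsum_powerSeries_nhdsWithin_lt hl).congr' ?_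
    filter_upwards [Ioo_mem_nhdsLT (show (0 : ℝ) < 1 by norm_num)] with x hx
    exact (hF x hx).tsum_eq
  rwa [tendsto_nhds_unique habel hV] at hl

theorem hasSum_log_one_add_of_abs_lt_one {x : ℝ} (hx : |x| < 1) :
    HasSum (fun n : ℕ => (-1) ^ n * x ^ (n + 1) / (n + 1)) (Real.log (1 + x)) := by
  have h := (Real.hasSum_pow_div_log_of_abs_lt_one (x := -x) (by rwa [abs_neg])).neg
  rw [neg_neg, sub_neg_eq_add] at h
  exact h.congr_fun fun n => by ring

theorem tendsto_alternating_harmonic_series :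
    Tendsto (fun N => ∑ n ∈ range N, (-1 : ℝ) ^ n * (1 / (n + 1))) atTop (𝓝 (Real.log 2)) := by
  refine Antitone.tendsto_alternating_series_of_hasSum_powerSeries
    antitone_one_div_add_one tendsto_one_div_add_atTop_nhds_zero_nat
    (F := fun x => Real.log (1 + x) / x) (fun x hx => ?_) ?_
  · have hx1 : |x| < 1 := abs_lt.2 ⟨by linarith [hx.1], hx.2⟩
    refine ((hasSum_log_one_add_of_abs_lt_one hx1).div_const x).congr_fun fun n => ?_
    field_simp [hx.1.ne']
    ring
  · have hc : ContinuousAt (fun x : ℝ => Real.log (1 + x) / x) 1 := by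
      fun_prop (disch := norm_num)
    simpa [one_add_one_eq_two] using hc.tendsto.mono_left nhdsWithin_le_nhds

theorem harmonic_eq_sum_range_one_div (n : ℕ) :
    (harmonic n : ℝ) = ∑ k ∈ range n, 1 / ((k : ℝ) + 1) := by
  simp [harmonic]

theorem one_le_harmonic_succ (n : ℕ) : (1 : ℝ) ≤ harmonic (n + 1) := by
  rw [harmonic_eq_sum_range_one_div, sum_range_succ']
  simp only [Nat.cast_zero, zero_add, div_one, le_add_iff_nonneg_left]
  positivity

theorem harmonic_nonneg (n : ℕ) : (0 : ℝ) ≤ harmonic n := by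
  rw [harmonic_eq_sum_range_one_div]; positivity

theorem tendsto_harmonic_div_add_one :
    Tendsto (fun n : ℕ => (harmonic n : ℝ) / (n + 1)) atTop (𝓝 0) := by
  refine squeeze_zero (fun n => by have := harmonic_nonneg n; positivity) (fun n => ?_)
    tendsto_one_div_add_atTop_nhds_zero_nat.cesaro
  rcases Nat.eq_zero_or_pos n with rfl | hn
  · simp
  · rw [← harmonic_eq_sum_range_one_div, div_eq_inv_mul]
    have := harmonic_nonneg n
    gcongr
    linarith

theorem sum_antidiagonal_one_div_mul (n : ℕ) :
    ∑ kl ∈ antidiagonal n, (1 : ℝ) / ((kl.1 + 1) * (kl.2 + 1))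
      = 2 * harmonic (n + 1) / (n + 2) := by
  have hsplit : ∀ kl ∈ antidiagonal n, (1 : ℝ) / ((kl.1 + 1) * (kl.2 + 1))
      = (1 / (kl.1 + 1) + 1 / (kl.2 + 1)) / (n + 2) := by
    rintro ⟨k, l⟩ hkl
    rw [HasAntidiagonal.mem_antidiagonal] at hkl
    have : (n : ℝ) + 2 = (k + 1) + (l + 1) := by rw [← hkl]; push_cast; ring
    rw [this]
    field_simp
    ring
  rw [sum_congr rfl hsplit, ← sum_div, sum_add_distrib,
    ← Nat.sum_antidiagonal_swap (f := fun kl => 1 / ((kl.2 : ℝ) + 1))]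
  simp only [Prod.snd_swap]
  rw [Nat.sum_antidiagonal_eq_sum_range_succ_mk, harmonic_eq_sum_range_one_div]
  ring

theorem hasSum_log_one_add_sq {x : ℝ} (hx : |x| < 1) :
    HasSum (fun n : ℕ => (-1) ^ n * (2 * harmonic (n + 1) / (n + 2)) * x ^ (n + 2))
      (Real.log (1 + x) ^ 2) := by
  set a : ℕ → ℝ := fun n => (-1) ^ n * x ^ (n + 1) / (n + 1)
  have hlog : HasSum a (Real.log (1 + x)) := hasSum_log_one_add_of_abs_lt_one hx
  have hnorm : Summable fun n => ‖a n‖ := by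
    refine .of_nonneg_of_le (fun n => norm_nonneg _) (fun n => ?_)
      ((summable_geometric_of_lt_one (abs_nonneg x) hx).mul_left |x|)
    simp only [a, norm_div, norm_mul, norm_pow, norm_neg, norm_one, one_pow, one_mul,
      Real.norm_eq_abs]
    rw [← pow_succ', abs_of_nonneg (by positivity : (0 : ℝ) ≤ n + 1)]
    exact div_le_self (by positivity) (le_add_of_nonneg_left n.cast_nonneg)
  have hprod := (summable_norm_sum_mul_antidiagonal_of_summable_norm hnorm hnorm).of_norm.hasSum
  rw [← tsum_mul_tsum_eq_tsum_sum_antidiagonal_of_summable_norm hnorm hnorm, hlog.tsum_eq,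
    ← sq] at hprod
  refine hprod.congr_fun fun n => ?_
  rw [← sum_antidiagonal_one_div_mul, mul_sum, sum_mul]
  refine sum_congr rfl fun kl hkl => ?_
  rw [HasAntidiagonal.mem_antidiagonal] at hkl
  subst hkl
  simp only [a]
  field_simp
  ring

theorem tendsto_alternating_harmonic_succ_div :
    Tendsto (fun N => ∑ n ∈ range N, (-1 : ℝ) ^ n * (harmonic (n + 1) / (n + 2))) atTop
      (𝓝 (Real.log 2 ^ 2 / 2)) := by
  have hanti : Antitone fun n : ℕ => (harmonic (n + 1) : ℝ) / (n + 2) := by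
    refine antitone_nat_of_succ_le fun n => ?_
    have h1 := one_le_harmonic_succ n
    rw [div_le_div_iff₀ (by positivity) (by positivity), harmonic_succ]
    push_cast
    field_simp
    nlinarith
  have hlim : Tendsto (fun n : ℕ => (harmonic (n + 1) : ℝ) / (n + 2)) atTop (𝓝 0) := by
    have := tendsto_harmonic_div_add_one.comp (tendsto_add_atTop_nat 1)
    refine this.congr fun n => ?_
    simp only [Function.comp_apply]
    push_cast
    ring
  refine hanti.tendsto_alternating_series_of_hasSum_powerSeries hlim
    (F := fun x => Real.log (1 + x) ^ 2 / (2 * x ^ 2)) (fun x hx => ?_) ?_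
  · have hx1 : |x| < 1 := abs_lt.2 ⟨by linarith [hx.1], hx.2⟩
    refine ((hasSum_log_one_add_sq hx1).div_const (2 * x ^ 2)).congr_fun fun n => ?_
    field_simp [hx.1.ne']
    ring
  · have hc : ContinuousAt (fun x : ℝ => Real.log (1 + x) ^ 2 / (2 * x ^ 2)) 1 := by
      fun_prop (disch := norm_num)
    simpa [one_add_one_eq_two] using hc.tendsto.mono_left nhdsWithin_le_nhds

theorem tendsto_alternating_harmonic_div :
    Tendsto (fun N => ∑ n ∈ range N, (-1 : ℝ) ^ n * (harmonic n / (n + 1))) atTop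
      (𝓝 (-(Real.log 2 ^ 2 / 2))) := by
  refine (tendsto_add_atTop_iff_nat 1).1
    (tendsto_alternating_harmonic_succ_div.neg.congr fun N => ?_)
  rw [sum_range_succ', ← sum_neg_distrib]
  simp only [harmonic_zero, Rat.cast_zero, zero_div, mul_zero, add_zero]
  refine sum_congr rfl fun n _ => ?_
  push_cast
  ring

theorem hasSum_alternating_inv_succ_sq :
    HasSum (fun n : ℕ => (-1 : ℝ) ^ n / (n + 1) ^ 2) (Real.pi ^ 2 / 12) := by
  set G : ℕ → ℝ := fun n => 1 / ((n : ℝ) + 1) ^ 2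
  have hG : HasSum G (Real.pi ^ 2 / 6) := by
    simpa [G] using (hasSum_nat_add_iff' 1).2 hasSum_zeta_two
  have hodd : HasSum (fun k => G (2 * k + 1)) (Real.pi ^ 2 / 24) := by
    rw [show Real.pi ^ 2 / 24 = Real.pi ^ 2 / 6 / 4 by ring]
    refine (hG.div_const 4).congr_fun fun k => ?_
    simp only [G]
    push_cast
    field_simp
    ring
  obtain ⟨s, heven⟩ : Summable fun k => G (2 * k) :=
    hG.summable.comp_injective (mul_right_injective₀ two_ne_zero)
  have hs : s + Real.pi ^ 2 / 24 = Real.pi ^ 2 / 6 := (heven.even_add_odd hodd).unique hG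
  rw [show Real.pi ^ 2 / 12 = s + -(Real.pi ^ 2 / 24) by linarith]
  refine HasSum.even_add_odd (heven.congr_fun fun k => ?_) (hodd.neg.congr_fun fun k => ?_)
  · simp [G, pow_mul]
  · simp [G, pow_succ, pow_mul, neg_div]

theorem two_mul_sum_alternating_sq {g : ℕ → ℝ} (hg : ∀ n : ℕ, g n + g (n + 1) = 1 / (n + 1))
    (N : ℕ) :
    2 * ∑ n ∈ range N, (-1) ^ n * g n ^ 2
      = g 0 ^ 2 - (-1) ^ N * g N ^ 2 + 2 * ((-1) ^ N * (harmonic N * g N))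
        + 2 * ∑ n ∈ range N, (-1) ^ n * ((harmonic n : ℝ) / (n + 1))
        + ∑ n ∈ range N, (-1 : ℝ) ^ n / (n + 1) ^ 2 := by
  induction N with
  | zero => simp
  | succ N ih =>
    have hnext : g (N + 1) = 1 / (N + 1) - g N := by linarith [hg N]
    rw [sum_range_succ, mul_add, ih]
    simp only [sum_range_succ, hnext, harmonic_succ, pow_succ]
    push_cast
    field_simp
    ring

theorem tendsto_sum_alternating_sq {g : ℕ → ℝ}
    (hrec : ∀ n : ℕ, g n + g (n + 1) = 1 / (n + 1))
    (hbound : ∀ n : ℕ, g n ∈ Set.Icc 0 (1 / ((n : ℝ) + 1))) :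
    Tendsto (fun N => ∑ n ∈ range N, (-1) ^ n * g n ^ 2) atTop
      (𝓝 ((g 0 ^ 2 - Real.log 2 ^ 2) / 2 + Real.pi ^ 2 / 24)) := by
  have hg : Tendsto g atTop (𝓝 0) := squeeze_zero (fun n => (hbound n).1) (fun n => (hbound n).2)
    tendsto_one_div_add_atTop_nhds_zero_nat
  have hHg : Tendsto (fun N => (harmonic N : ℝ) * g N) atTop (𝓝 0) := by
    refine squeeze_zero (fun n => mul_nonneg (harmonic_nonneg n) (hbound n).1) (fun n => ?_)
      tendsto_harmonic_div_add_one
    rw [div_eq_mul_one_div]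
    exact mul_le_mul_of_nonneg_left (hbound n).2 (harmonic_nonneg n)
  have hlim := ((((tendsto_const_nhds (x := g 0 ^ 2)).sub
    (tendsto_neg_one_pow_mul_of_tendsto_zero (by simpa using hg.pow 2))).add
    ((tendsto_neg_one_pow_mul_of_tendsto_zero hHg).const_mul 2)).add
    (tendsto_alternating_harmonic_div.const_mul 2)).add
    hasSum_alternating_inv_succ_sq.tendsto_sum_nat
  rw [← funext (two_mul_sum_alternating_sq hrec)] at hlim
  convert hlim.div_const 2 using 2 <;> ring

theorem stmt_3 (g : ℕ → ℝ)
    (hg : ∀ n : ℕ,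
      Tendsto (fun K => ∑ k ∈ Finset.range K, (-1 : ℝ) ^ k / (n + k + 1)) atTop (nhds (g n))) :
    Tendsto (fun N => ∑ n ∈ Finset.range N, (-1 : ℝ) ^ n * (g n) ^ 2) atTop
      (nhds (Real.pi ^ 2 / 24)) := by
  set f : ℕ → ℝ := fun m => 1 / (m + 1)
  have htail : ∀ n, Tendsto (fun K => ∑ k ∈ range K, (-1) ^ k * f (n + k)) atTop (𝓝 (g n)) :=
    fun n => (hg n).congr fun K => sum_congr rfl fun k _ => by simp only [f]; push_cast; ring
  have hrec : ∀ n : ℕ, g n + g (n + 1) = 1 / (n + 1) := fun n =>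
    alternating_tail_add_tail_succ n (htail n) (htail (n + 1))
  have hbound : ∀ n, g n ∈ Set.Icc 0 (f n) := fun n => by
    have hanti : Antitone fun k => f (n + k) := fun _ _ h => antitone_one_div_add_one (by omega)
    simpa using hanti.mem_Icc_of_tendsto_alternating_series (htail n)
  have hg0 : g 0 = Real.log 2 :=
    tendsto_nhds_unique (htail 0) (by simpa [f] using tendsto_alternating_harmonic_series)
  simpa [hg0] using tendsto_sum_alternating_sq hrec hbound
end

section
/- ∫₀^{1/2} ln²(1-t)/t dt = -(ln 2)³ - 2 ln 2 · Li₂(1/2) - 2 Li₃(1/2) + 2ζ(3). -/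
/-!
Substituting `u = 1 - t` turns the integral into `∫_{1/2}^1 log² u / (1 - u) du`. Expanding
`1 / (1 - u)` as a geometric series, each term `∫ u ^ n log² u` has an elementary primitive, and
summing the boundary values term by term produces `ζ(3)`, `Li₃`, `Li₂` and the series
`∑ aⁿ⁺¹ / (n + 1) = -log (1 - a)`.
-/

noncomputable def Li2 (z : ℝ) : ℝ := ∑' n : ℕ, z ^ (n + 1) / ((n : ℝ) + 1) ^ 2
noncomputable def Li3 (z : ℝ) : ℝ := ∑' n : ℕ, z ^ (n + 1) / ((n : ℝ) + 1) ^ 3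

open MeasureTheory Real Set

noncomputable def powMulLogSqPrimitive (n : ℕ) (u : ℝ) : ℝ :=
  u ^ (n + 1) * (log u ^ 2 / ((n : ℝ) + 1) - 2 * log u / ((n : ℝ) + 1) ^ 2 + 2 / ((n : ℝ) + 1) ^ 3)

lemma hasDerivAt_powMulLogSqPrimitive (n : ℕ) {u : ℝ} (hu : 0 < u) :
    HasDerivAt (powMulLogSqPrimitive n) (u ^ n * log u ^ 2) u := by
  have hlog := hasDerivAt_log hu.ne'
  have hbracket := (((hlog.pow 2).div_const ((n : ℝ) + 1)).sub
    ((hlog.const_mul 2).div_const (((n : ℝ) + 1) ^ 2))).add_const (2 / ((n : ℝ) + 1) ^ 3)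
  refine ((hasDerivAt_pow (n + 1) u).mul hbracket).congr_deriv ?_
  simp only [Pi.sub_apply, Pi.pow_apply, Nat.add_sub_cancel]
  field_simp
  push_cast
  ring

lemma integral_pow_mul_log_sq (n : ℕ) {a b : ℝ} (ha : 0 < a) (hb : 0 < b) :
    ∫ u in a..b, u ^ n * log u ^ 2 = powMulLogSqPrimitive n b - powMulLogSqPrimitive n a := by
  have hpos : ∀ u ∈ uIcc a b, 0 < u := fun u hu =>
    lt_of_lt_of_le (lt_min ha hb) (by simpa [uIcc] using hu.1)
  refine intervalIntegral.integral_eq_sub_of_hasDerivAt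
    (fun u hu => hasDerivAt_powMulLogSqPrimitive n (hpos u hu)) ?_
  refine ContinuousOn.intervalIntegrable ?_
  exact (continuousOn_pow n).mul
    ((continuousOn_log.mono fun u hu => (hpos u hu).ne').pow 2)

lemma summable_pow_succ_div_succ_pow {a : ℝ} (ha₀ : 0 ≤ a) (ha₁ : a < 1) (k : ℕ) :
    Summable fun n : ℕ => a ^ (n + 1) / ((n : ℝ) + 1) ^ k := by
  refine Summable.of_nonneg_of_le (fun n => by positivity) (fun n => ?_)
    ((summable_nat_add_iff 1).2 (summable_geometric_of_lt_one ha₀ ha₁))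
  exact div_le_self (by positivity) (one_le_pow₀ (by linarith [n.cast_nonneg (α := ℝ)]))

lemma hasSum_powMulLogSqPrimitive_one_sub {a : ℝ} (ha₀ : 0 < a) (ha₁ : a < 1) :
    HasSum (fun n => powMulLogSqPrimitive n 1 - powMulLogSqPrimitive n a)
      (2 * ∑' n : ℕ, 1 / ((n : ℝ) + 1) ^ 3 + log a ^ 2 * log (1 - a) + 2 * log a * Li2 a
        - 2 * Li3 a) := by
  have hζ : HasSum (fun n : ℕ => 1 / ((n : ℝ) + 1) ^ 3) (∑' n : ℕ, 1 / ((n : ℝ) + 1) ^ 3) := by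
    refine Summable.hasSum ?_
    exact_mod_cast (summable_nat_add_iff 1).2 (summable_one_div_nat_pow.2 (by norm_num : 1 < 3))
  have hLi₁ := hasSum_pow_div_log_of_abs_lt_one (abs_lt.2 ⟨by linarith, ha₁⟩)
  have hLi₂ : HasSum _ (Li2 a) := (summable_pow_succ_div_succ_pow ha₀.le ha₁ 2).hasSum
  have hLi₃ : HasSum _ (Li3 a) := (summable_pow_succ_div_succ_pow ha₀.le ha₁ 3).hasSum
  have hsum := (hζ.mul_left 2).sub (((hLi₁.mul_left (log a ^ 2)).sub
    (hLi₂.mul_left (2 * log a))).add (hLi₃.mul_left 2))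
  rw [show 2 * ∑' n : ℕ, 1 / ((n : ℝ) + 1) ^ 3 + log a ^ 2 * log (1 - a) + 2 * log a * Li2 a
      - 2 * Li3 a = 2 * ∑' n : ℕ, 1 / ((n : ℝ) + 1) ^ 3
      - (log a ^ 2 * -log (1 - a) - 2 * log a * Li2 a + 2 * Li3 a) by ring]
  refine hsum.congr_fun fun n => ?_
  simp only [powMulLogSqPrimitive, log_one]
  ring

lemma hasSum_pow_mul_log_sq {u : ℝ} (hu₀ : 0 ≤ u) (hu₁ : u ≤ 1) :
    HasSum (fun n : ℕ => u ^ n * log u ^ 2) (log u ^ 2 / (1 - u)) := by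
  -- at `u = 1` both sides vanish because `log 1 = 0`, regardless of the junk value of `1 / 0`
  rcases hu₁.lt_or_eq with hu₁ | rfl
  · simpa only [inv_mul_eq_div] using (hasSum_geometric_of_lt_one hu₀ hu₁).mul_right (log u ^ 2)
  · simp

lemma hasSum_integral_pow_mul_log_sq {a : ℝ} (ha₀ : 0 < a) (ha₁ : a < 1) :
    HasSum (fun n : ℕ => ∫ u in a..1, u ^ n * log u ^ 2) (∫ u in a..1, log u ^ 2 / (1 - u)) := by
  simp only [intervalIntegral.integral_of_le ha₁.le]
  have hpos : ∀ u ∈ Ioc a 1, 0 < u := fun u hu => ha₀.trans hu.1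
  rw [setIntegral_congr_fun measurableSet_Ioc
    fun u hu => ((hasSum_pow_mul_log_sq (hpos u hu).le hu.2).tsum_eq).symm]
  refine hasSum_integral_of_summable_integral_norm (fun n => ?_) ?_
  · refine (ContinuousOn.integrableOn_Icc ?_).mono_set Ioc_subset_Icc_self
    exact (continuousOn_pow n).mul
      ((continuousOn_log.mono fun u hu => (ha₀.trans_le hu.1).ne').pow 2)
  · refine (hasSum_powMulLogSqPrimitive_one_sub ha₀ ha₁).summable.congr fun n => ?_
    rw [← integral_pow_mul_log_sq n ha₀ one_pos, intervalIntegral.integral_of_le ha₁.le]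
    refine setIntegral_congr_fun measurableSet_Ioc fun u hu => ?_
    have := hpos u hu
    exact (norm_of_nonneg (by positivity : 0 ≤ u ^ n * log u ^ 2)).symm

lemma integral_log_one_sub_sq_div_eq_integral_log_sq_div_one_sub (x : ℝ) :
    ∫ t in (0 : ℝ)..x, log (1 - t) ^ 2 / t = ∫ u in (1 - x)..1, log u ^ 2 / (1 - u) := by
  simpa using intervalIntegral.integral_comp_sub_left (fun u => log u ^ 2 / (1 - u)) (1 : ℝ)
    (a := 0) (b := x)

theorem integral_log_one_sub_sq_div {x : ℝ} (hx₀ : 0 < x) (hx₁ : x < 1) :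
    ∫ t in (0 : ℝ)..x, log (1 - t) ^ 2 / t
      = 2 * ∑' n : ℕ, 1 / ((n : ℝ) + 1) ^ 3 + log (1 - x) ^ 2 * log x
        + 2 * log (1 - x) * Li2 (1 - x) - 2 * Li3 (1 - x) := by
  have ha₀ : 0 < 1 - x := by linarith
  have ha₁ : 1 - x < 1 := by linarith
  rw [integral_log_one_sub_sq_div_eq_integral_log_sq_div_one_sub]
  refine (hasSum_integral_pow_mul_log_sq ha₀ ha₁).unique ?_
  simpa only [integral_pow_mul_log_sq _ ha₀ one_pos, sub_sub_cancel]
    using hasSum_powMulLogSqPrimitive_one_sub ha₀ ha₁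

theorem stmt_9 :
    (∫ t in (0:ℝ)..(1/2), (Real.log (1 - t)) ^ 2 / t)
      = -(Real.log 2) ^ 3 - 2 * Real.log 2 * Li2 (1/2) - 2 * Li3 (1/2)
        + 2 * (∑' n : ℕ, 1 / ((n : ℝ) + 1) ^ 3) := by
  have h := integral_log_one_sub_sq_div (x := 1 / 2) (by norm_num) (by norm_num)
  have hlog : log (1 / 2 : ℝ) = -log 2 := by rw [one_div, log_inv]
  rw [show (1 : ℝ) - 1 / 2 = 1 / 2 by norm_num, hlog] at h
  rw [h]
  ring
end

section
/- ∫₀¹ (1/(1+x)) · Li₂((1-x)/2) dx = π²/12 · ln 2 - (ln 2)³/6 - ζ(3)/4. -/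
open Real Topology Set

lemma summable_one_div_succ_pow {k : ℕ} (hk : 2 ≤ k) :
    Summable fun n : ℕ => 1 / ((n : ℝ) + 1) ^ k := by
  have h := (summable_nat_add_iff 1).mpr ((summable_one_div_nat_pow (p := k)).mpr hk)
  exact h.congr fun n => by push_cast; rfl

lemma continuous_log_mul_log_one_sub : Continuous fun y : ℝ => log y * log (1 - y) := by
  set h := fun y : ℝ => log y * log (1 - y)
  have hsymm : h = h ∘ fun y => 1 - y := by ext y; simp [h, mul_comm]
  have h0 : ContinuousAt h 0 := by
    have hlog : (fun y : ℝ => log (1 - y)) =O[𝓝 0] fun y => y := by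
      simpa using (((hasDerivAt_id' (0 : ℝ)).const_sub 1).log (by norm_num)).isBigO_sub
    have := ((Asymptotics.isBigO_refl log (𝓝 0)).mul hlog).trans_tendsto
      (by simpa [mul_comm] using continuous_mul_log.tendsto 0)
    simpa [ContinuousAt, h, mul_comm] using this
  rw [continuous_iff_continuousAt]
  intro y
  rcases eq_or_ne y 0 with rfl | hy0
  · exact h0
  rcases eq_or_ne y 1 with rfl | hy1
  · rw [hsymm]
    exact ContinuousAt.comp (by simpa using h0) (by fun_prop)
  exact (continuousAt_log hy0).mul
    ((continuousAt_log (sub_ne_zero.2 hy1.symm)).comp (by fun_prop))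

lemma eq_of_hasDerivAt_zero {f : ℝ → ℝ} {a b : ℝ} (hab : a ≤ b)
    (hf : ContinuousOn f (Icc a b)) (hf' : ∀ x ∈ Ioo a b, HasDerivAt f 0 x) : f b = f a := by
  have := intervalIntegral.integral_eq_sub_of_hasDerivAt_of_le hab hf hf' intervalIntegrable_const
  simp only [intervalIntegral.integral_zero] at this
  linarith

lemma neg_div_one_sub_mem_Icc {y : ℝ} (hy : y ∈ Icc (0 : ℝ) (1 / 2)) :
    -y / (1 - y) ∈ Icc (-1 : ℝ) 1 := by
  have h1y : 0 < 1 - y := by linarith [hy.2]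
  constructor
  · rw [le_div_iff₀ h1y]; linarith [hy.2]
  · exact (div_nonpos_of_nonpos_of_nonneg (by linarith [hy.1]) h1y.le).trans zero_le_one

lemma abs_neg_div_one_sub_lt_one {y : ℝ} (hy0 : 0 < y) (hy : y < 1 / 2) :
    |-y / (1 - y)| < 1 := by
  have h1y : 0 < 1 - y := by linarith
  rw [abs_div, abs_neg, abs_of_pos hy0, abs_of_pos h1y, div_lt_one h1y]
  linarith

lemma continuousOn_neg_div_one_sub : ContinuousOn (fun y : ℝ => -y / (1 - y)) (Icc 0 (1 / 2)) :=
  .div (by fun_prop) (by fun_prop) fun y hy => by linarith [hy.2]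

lemma hasDerivAt_neg_div_one_sub {y : ℝ} (hy : y ≠ 1) :
    HasDerivAt (fun y : ℝ => -y / (1 - y)) (-1 / (1 - y) ^ 2) y := by
  refine ((hasDerivAt_id' y).neg.div ((hasDerivAt_id' y).const_sub 1)
    (sub_ne_zero.2 hy.symm)).congr_deriv ?_
  simp only [Pi.neg_apply]
  ring

/-- The series converges for `|z| ≤ 1` if `2 ≤ k` and for `|z| < 1` in general; elsewhere the
`tsum` is the junk value `0`. -/
noncomputable def Li (k : ℕ) (z : ℝ) : ℝ := ∑' n : ℕ, z ^ (n + 1) / ((n : ℝ) + 1) ^ k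

lemma Li2_eq_Li : Li2 = Li 2 := rfl

namespace Li

variable {k : ℕ} {z t : ℝ}

lemma abs_term_le (hz : |z| ≤ 1) (n : ℕ) :
    |z ^ (n + 1) / ((n : ℝ) + 1) ^ k| ≤ 1 / ((n : ℝ) + 1) ^ k := by
  rw [abs_div, abs_pow, abs_of_pos (by positivity : (0 : ℝ) < ((n : ℝ) + 1) ^ k)]
  gcongr
  exact pow_le_one₀ (abs_nonneg z) hz

lemma summable (hk : 2 ≤ k) (hz : |z| ≤ 1) :
    Summable fun n : ℕ => z ^ (n + 1) / ((n : ℝ) + 1) ^ k :=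
  .of_abs <| (summable_one_div_succ_pow hk).of_nonneg_of_le (fun _ => abs_nonneg _)
    (abs_term_le hz)

lemma continuousOn (hk : 2 ≤ k) : ContinuousOn (Li k) (Icc (-1) 1) :=
  continuousOn_tsum (fun n => by fun_prop) (summable_one_div_succ_pow hk)
    fun n _ hx => abs_term_le (abs_le.mpr hx) n

@[simp] lemma apply_zero : Li k 0 = 0 := by simp [Li]

lemma apply_one : Li k 1 = ∑' n : ℕ, 1 / ((n : ℝ) + 1) ^ k := by simp [Li]

lemma two_apply_one : Li 2 1 = π ^ 2 / 6 := by
  rw [apply_one, ← hasSum_zeta_two.tsum_eq, hasSum_zeta_two.summable.tsum_eq_zero_add]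
  simp

lemma one_apply (hz : |z| < 1) : Li 1 z = -log (1 - z) := by
  simpa [Li] using (hasSum_pow_div_log_of_abs_lt_one hz).tsum_eq

lemma duplication (hk : 2 ≤ k) (hz : |z| ≤ 1) :
    Li k z + Li k (-z) = 2 / 2 ^ k * Li k (z ^ 2) := by
  set f := fun n : ℕ => z ^ (n + 1) / ((n : ℝ) + 1) ^ k + (-z) ^ (n + 1) / ((n : ℝ) + 1) ^ k
  have hf : HasSum f (Li k z + Li k (-z)) :=
    (summable hk hz).hasSum.add (summable hk (by rwa [abs_neg])).hasSum
  have heven : HasSum (fun m => f (2 * m)) 0 := by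
    convert hasSum_zero with m
    simp [f, pow_succ, pow_mul, neg_div]
  have hodd : HasSum (fun m => f (2 * m + 1)) (2 / 2 ^ k * Li k (z ^ 2)) := by
    have hz2 : |z ^ 2| ≤ 1 := by rw [abs_pow]; exact pow_le_one₀ (abs_nonneg z) hz
    refine ((summable hk hz2).hasSum.mul_left (2 / 2 ^ k)).congr_fun fun m => ?_
    have hsign : (-1 : ℝ) ^ (2 * m + 1 + 1) = 1 := by rw [pow_succ, pow_succ, pow_mul]; norm_num
    simp only [f, neg_pow z, hsign, one_mul, ← pow_mul]
    push_cast
    rw [show (2 * (m : ℝ) + 1 + 1) = 2 * (m + 1) by ring, mul_pow]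
    field_simp
    ring
  simpa using hf.unique (heven.even_add_odd hodd)

lemma hasDerivAt_succ (ht : |t| < 1) (ht0 : t ≠ 0) :
    HasDerivAt (Li (k + 1)) (Li k t / t) t := by
  obtain ⟨r, htr, hr1⟩ := exists_between ht
  have hr0 : 0 < r := (abs_nonneg t).trans_lt htr
  have hseries : HasDerivAt (Li (k + 1)) (∑' n : ℕ, t ^ n / ((n : ℝ) + 1) ^ k) t := by
    refine hasDerivAt_tsum_of_isPreconnected (y₀ := 0) (u := fun n : ℕ => r ^ n)
      (g := fun n z => z ^ (n + 1) / ((n : ℝ) + 1) ^ (k + 1))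
      (g' := fun n y => y ^ n / ((n : ℝ) + 1) ^ k)
      (summable_geometric_of_lt_one hr0.le hr1)
      Metric.isOpen_ball (convex_ball 0 r).isPreconnected (fun n y _ => ?_) (fun n y hy => ?_)
      (Metric.mem_ball_self hr0) (by simp) (by simpa using htr)
    · have h := (hasDerivAt_pow (n + 1) y).div_const (((n : ℝ) + 1) ^ (k + 1))
      refine h.congr_deriv ?_
      rw [Nat.add_sub_cancel, pow_succ' _ k, Nat.cast_succ,
        mul_div_mul_left _ _ (by positivity : (n : ℝ) + 1 ≠ 0)]
    · rw [mem_ball_zero_iff, Real.norm_eq_abs] at hy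
      have hden : 1 ≤ ((n : ℝ) + 1) ^ k := one_le_pow₀ (by simp)
      rw [Real.norm_eq_abs, abs_div, abs_pow, abs_of_pos (zero_lt_one.trans_le hden)]
      calc |y| ^ n / ((n : ℝ) + 1) ^ k ≤ |y| ^ n := div_le_self (by positivity) hden
        _ ≤ r ^ n := by gcongr
  have hLi : Li k t = t * ∑' n : ℕ, t ^ n / ((n : ℝ) + 1) ^ k := by
    rw [Li, ← tsum_mul_left]
    congr 1 with n
    ring
  rwa [hLi, mul_div_cancel_left₀ _ ht0]

lemma hasDerivAt_two (ht : |t| < 1) (ht0 : t ≠ 0) : HasDerivAt (Li 2) (-log (1 - t) / t) t := by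
  simpa [one_apply ht] using hasDerivAt_succ (k := 1) ht ht0

lemma euler_reflection_two {x : ℝ} (hx : x ∈ Icc (0 : ℝ) 1) :
    Li 2 x + Li 2 (1 - x) + log x * log (1 - x) = π ^ 2 / 6 := by
  set F := fun y => Li 2 y + Li 2 (1 - y) + log y * log (1 - y)
  have hcont : ContinuousOn F (Icc 0 1) := by
    have hmaps : MapsTo (fun y : ℝ => 1 - y) (Icc 0 1) (Icc (-1) 1) :=
      fun y hy => ⟨by linarith [hy.2], by linarith [hy.1]⟩
    refine .add (.add ?_ ?_) continuous_log_mul_log_one_sub.continuousOn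
    · exact (continuousOn le_rfl).mono (Icc_subset_Icc (by norm_num) le_rfl)
    · exact (continuousOn le_rfl).comp (by fun_prop) hmaps
  have hderiv : ∀ y ∈ Ioo (0 : ℝ) 1, HasDerivAt F 0 y := by
    intro y ⟨hy0, hy1⟩
    have h1y : 0 < 1 - y := by linarith
    have d1 := hasDerivAt_two (by rw [abs_of_pos hy0]; exact hy1) hy0.ne'
    have d2 := (hasDerivAt_two (by rw [abs_of_pos h1y]; linarith) h1y.ne').comp y
      ((hasDerivAt_id' y).const_sub 1)
    have d3 := (Real.hasDerivAt_log hy0.ne').mul (((hasDerivAt_id' y).const_sub 1).log h1y.ne')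
    refine ((d1.add d2).add d3).congr_deriv ?_
    simp only [sub_sub_cancel]
    field_simp
    ring
  have := eq_of_hasDerivAt_zero hx.1 (hcont.mono (Icc_subset_Icc le_rfl hx.2))
    fun y hy => hderiv y ⟨hy.1, hy.2.trans_le hx.2⟩
  simpa [F, one_apply, two_apply_one] using this

lemma landen_two {x : ℝ} (hx : x ∈ Icc (0 : ℝ) (1 / 2)) :
    Li 2 (-x / (1 - x)) = -Li 2 x - log (1 - x) ^ 2 / 2 := by
  set F := fun y => Li 2 (-y / (1 - y)) + Li 2 y + log (1 - y) ^ 2 / 2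
  have hcont : ContinuousOn F (Icc 0 (1 / 2)) := by
    refine .add (.add ?_ ?_) ?_
    · exact (continuousOn le_rfl).comp continuousOn_neg_div_one_sub
        fun y hy => neg_div_one_sub_mem_Icc hy
    · exact (continuousOn le_rfl).mono (Icc_subset_Icc (by norm_num) (by norm_num))
    · exact ((ContinuousOn.log (by fun_prop) fun y hy => by linarith [hy.2]).pow 2).div_const 2
  have hderiv : ∀ y ∈ Ioo (0 : ℝ) (1 / 2), HasDerivAt F 0 y := by
    intro y ⟨hy0, hy2⟩
    have h1y : 0 < 1 - y := by linarith
    have hu := abs_neg_div_one_sub_lt_one hy0 hy2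
    have hu0 : -y / (1 - y) ≠ 0 := div_ne_zero (neg_ne_zero.2 hy0.ne') h1y.ne'
    have d1 := (hasDerivAt_two hu hu0).comp y (hasDerivAt_neg_div_one_sub (by linarith))
    have d2 := hasDerivAt_two (by rw [abs_of_pos hy0]; linarith) hy0.ne'
    have d3 := ((((hasDerivAt_id' y).const_sub 1).log h1y.ne').pow 2).div_const 2
    refine ((d1.add d2).add d3).congr_deriv ?_
    have h1u : 1 - -y / (1 - y) = (1 - y)⁻¹ := by field_simp; ring
    simp only [h1u, log_inv]
    field_simp
    ring
  have := eq_of_hasDerivAt_zero hx.1 (hcont.mono (Icc_subset_Icc le_rfl hx.2))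
    fun y hy => hderiv y ⟨hy.1, hy.2.trans_le hx.2⟩
  have hF0 : F 0 = 0 := by simp [F]
  linear_combination this.trans hF0

lemma two_apply_half : Li 2 (1 / 2) = π ^ 2 / 12 - log 2 ^ 2 / 2 := by
  have h := euler_reflection_two (x := 1 / 2) ⟨by norm_num, by norm_num⟩
  rw [show (1 : ℝ) - 1 / 2 = 1 / 2 by norm_num, one_div, log_inv] at h
  rw [one_div]
  linarith

lemma three_apply_neg_one : Li 3 (-1) = -(3 / 4) * Li 3 1 := by
  have h := duplication (k := 3) (z := 1) (by norm_num) (by norm_num)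
  rw [one_pow] at h
  linarith

lemma landen_three {x : ℝ} (hx : x ∈ Icc (0 : ℝ) (1 / 2)) :
    Li 3 x + Li 3 (1 - x) + Li 3 (-x / (1 - x)) = Li 3 1 + log (1 - x) ^ 3 / 6
      + π ^ 2 / 6 * log (1 - x) - log (1 - x) ^ 2 * log x / 2 := by
  set F := fun y => Li 3 y + Li 3 (1 - y) + Li 3 (-y / (1 - y)) - log (1 - y) ^ 3 / 6
    - π ^ 2 / 6 * log (1 - y) + log (1 - y) * (log y * log (1 - y)) / 2
  have hcont : ContinuousOn F (Icc 0 (1 / 2)) := by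
    have hlog : ContinuousOn (fun y : ℝ => log (1 - y)) (Icc 0 (1 / 2)) :=
      .log (by fun_prop) fun y hy => by linarith [hy.2]
    have hmaps : MapsTo (fun y : ℝ => 1 - y) (Icc 0 (1 / 2)) (Icc (-1) 1) :=
      fun y hy => ⟨by linarith [hy.2], by linarith [hy.1]⟩
    refine .add (.sub (.sub (.add (.add ?_ ?_) ?_) ((hlog.pow 3).div_const 6))
      (continuousOn_const.mul hlog))
      ((hlog.mul continuous_log_mul_log_one_sub.continuousOn).div_const 2)
    · exact (continuousOn (by norm_num)).mono (Icc_subset_Icc (by norm_num) (by norm_num))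
    · exact (continuousOn (by norm_num)).comp (by fun_prop) hmaps
    · exact (continuousOn (by norm_num)).comp continuousOn_neg_div_one_sub
        fun y hy => neg_div_one_sub_mem_Icc hy
  have hderiv : ∀ y ∈ Ioo (0 : ℝ) (1 / 2), HasDerivAt F 0 y := by
    intro y ⟨hy0, hy2⟩
    have h1y : 0 < 1 - y := by linarith
    have hu := abs_neg_div_one_sub_lt_one hy0 hy2
    have hu0 : -y / (1 - y) ≠ 0 := div_ne_zero (neg_ne_zero.2 hy0.ne') h1y.ne'
    have dlog := ((hasDerivAt_id' y).const_sub 1).log h1y.ne'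
    have d1 := hasDerivAt_succ (k := 2) (by rw [abs_of_pos hy0]; linarith) hy0.ne'
    have d2 := (hasDerivAt_succ (k := 2) (by rw [abs_of_pos h1y]; linarith) h1y.ne').comp y
      ((hasDerivAt_id' y).const_sub 1)
    have d3 := (hasDerivAt_succ (k := 2) hu hu0).comp y (hasDerivAt_neg_div_one_sub (by linarith))
    have d4 := (dlog.pow 3).div_const 6
    have d5 := dlog.const_mul (π ^ 2 / 6)
    have d6 := (dlog.mul ((Real.hasDerivAt_log hy0.ne').mul dlog)).div_const 2
    refine (((((d1.add d2).add d3).sub d4).sub d5).add d6).congr_deriv ?_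
    have hrefl : Li 2 (1 - y) = π ^ 2 / 6 - Li 2 y - log y * log (1 - y) := by
      linarith [euler_reflection_two ⟨hy0.le, by linarith⟩]
    simp only [Pi.mul_apply, landen_two ⟨hy0.le, hy2.le⟩, hrefl]
    field_simp
    ring
  have := eq_of_hasDerivAt_zero hx.1 (hcont.mono (Icc_subset_Icc le_rfl hx.2))
    fun y hy => hderiv y ⟨hy.1, hy.2.trans_le hx.2⟩
  have hF0 : F 0 = Li 3 1 := by simp [F]
  linear_combination this.trans hF0

lemma three_apply_half : Li 3 (1 / 2) = 7 / 8 * Li 3 1 - π ^ 2 / 12 * log 2 + log 2 ^ 3 / 6 := by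
  have h := landen_three (x := 1 / 2) ⟨by norm_num, by norm_num⟩
  rw [show (1 : ℝ) - 1 / 2 = 1 / 2 by norm_num, show -(1 / 2 : ℝ) / (1 / 2) = -1 by norm_num,
    three_apply_neg_one, one_div, log_inv] at h
  rw [one_div]
  linarith

noncomputable def primitive (v : ℝ) : ℝ :=
  log v * Li 2 (1 - v) + log v ^ 2 * log (1 - v) + 2 * log v * Li 2 v - 2 * Li 3 v

lemma hasDerivAt_primitive {v : ℝ} (hv : v ∈ Ioo (0 : ℝ) 1) :
    HasDerivAt primitive (Li 2 (1 - v) / v) v := by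
  obtain ⟨hv0, hv1⟩ := hv
  have h1v : 0 < 1 - v := by linarith
  have hv' : |v| < 1 := by rw [abs_of_pos hv0]; exact hv1
  have dlog := Real.hasDerivAt_log hv0.ne'
  have dlog1 := ((hasDerivAt_id' v).const_sub 1).log h1v.ne'
  have d2 := hasDerivAt_two hv' hv0.ne'
  have d2' := (hasDerivAt_two (by rw [abs_of_pos h1v]; linarith) h1v.ne').comp v
    ((hasDerivAt_id' v).const_sub 1)
  have d3 := hasDerivAt_succ (k := 2) hv' hv0.ne'
  refine ((((dlog.mul d2').add ((dlog.pow 2).mul dlog1)).add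
    ((dlog.const_mul 2).mul d2)).sub (d3.const_mul 2)).congr_deriv ?_
  simp only [Pi.pow_apply, Function.comp_apply, sub_sub_cancel]
  field_simp
  ring

lemma continuousOn_primitive : ContinuousOn primitive (Icc (1 / 2) 1) := by
  have hlog : ContinuousOn log (Icc (1 / 2 : ℝ) 1) :=
    fun v hv => (continuousAt_log (by linarith [hv.1])).continuousWithinAt
  have hLi {k : ℕ} (hk : 2 ≤ k) : ContinuousOn (Li k) (Icc (1 / 2) 1) :=
    (continuousOn hk).mono (Icc_subset_Icc (by norm_num) le_rfl)
  have hLi1 : ContinuousOn (fun v => Li 2 (1 - v)) (Icc (1 / 2) 1) :=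
    (continuousOn le_rfl).comp (by fun_prop) fun v hv =>
      ⟨by linarith [hv.2], by linarith [hv.1]⟩
  refine .congr (f := fun v => log v * Li 2 (1 - v) + log v * (log v * log (1 - v))
    + 2 * log v * Li 2 v - 2 * Li 3 v) ?_ fun v _ => by simp only [primitive]; ring
  exact .sub (.add (.add (hlog.mul hLi1) (hlog.mul continuous_log_mul_log_one_sub.continuousOn))
    ((continuousOn_const.mul hlog).mul (hLi le_rfl))) (continuousOn_const.mul (hLi (by norm_num)))

lemma primitive_one : primitive 1 = -2 * Li 3 1 := by simp [primitive]

lemma primitive_half :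
    primitive (1 / 2) = -3 * log 2 * Li 2 (1 / 2) - log 2 ^ 3 - 2 * Li 3 (1 / 2) := by
  rw [primitive, show (1 : ℝ) - 1 / 2 = 1 / 2 by norm_num, one_div, log_inv]
  ring

end Li

open Li in
lemma integral_inv_one_add_mul_Li_two :
    ∫ x in (0 : ℝ)..1, 1 / (1 + x) * Li 2 ((1 - x) / 2) = primitive 1 - primitive (1 / 2) := by
  have hv : ∀ x ∈ Icc (0 : ℝ) 1, (1 + x) / 2 ∈ Icc (1 / 2) 1 :=
    fun x hx => ⟨by linarith [hx.1], by linarith [hx.2]⟩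
  have hderiv : ∀ x ∈ Ioo (0 : ℝ) 1,
      HasDerivAt (fun x => primitive ((1 + x) / 2)) (1 / (1 + x) * Li 2 ((1 - x) / 2)) x := by
    intro x ⟨hx0, hx1⟩
    refine ((hasDerivAt_primitive ⟨by linarith, by linarith⟩).comp x
      (((hasDerivAt_id' x).const_add 1).div_const 2)).congr_deriv ?_
    rw [show 1 - (1 + x) / 2 = (1 - x) / 2 by ring]
    field_simp
  have hint : ContinuousOn (fun x : ℝ => 1 / (1 + x) * Li 2 ((1 - x) / 2)) (Icc 0 1) :=
    .mul (.div continuousOn_const (by fun_prop) fun x hx => by linarith [hx.1])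
      ((continuousOn le_rfl).comp (by fun_prop) fun x hx =>
        ⟨by linarith [hx.2], by linarith [hx.1]⟩)
  have := intervalIntegral.integral_eq_sub_of_hasDerivAt_of_le zero_le_one
    (continuousOn_primitive.comp (by fun_prop) hv) hderiv
    (hint.intervalIntegrable_of_Icc zero_le_one)
  convert this using 2 <;> norm_num

theorem stmt_10 :
    (∫ x in (0:ℝ)..1, (1 / (1 + x)) * Li2 ((1 - x) / 2))
      = Real.pi ^ 2 / 12 * Real.log 2 - (Real.log 2) ^ 3 / 6
        - (∑' n : ℕ, 1 / ((n : ℝ) + 1) ^ 3) / 4 := by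
  rw [Li2_eq_Li, integral_inv_one_add_mul_Li_two, Li.primitive_one, Li.primitive_half,
    Li.two_apply_half, Li.three_apply_half, Li.apply_one]
  ring
end

section
/- -∫₀¹ Li₂(-x)/(1+x) dx = π²/12 · ln 2 - ζ(3)/4. -/
open Real Set Filter Topology

/-- `Li_s(z)`. The series converges for `|z| < 1`, and for `|z| ≤ 1` when `2 ≤ s`;
elsewhere the `tsum` is `0`. -/
noncomputable def polylog (s : ℕ) (z : ℝ) : ℝ := ∑' n : ℕ, z ^ (n + 1) / ((n : ℝ) + 1) ^ s

lemma Li2_eq_polylog_two : Li2 = polylog 2 := rfl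

lemma polylog_zero_right (s : ℕ) : polylog s 0 = 0 := by simp [polylog]

lemma polylog_one_right (s : ℕ) : polylog s 1 = ∑' n : ℕ, 1 / ((n : ℝ) + 1) ^ s := by
  simp [polylog]

lemma summable_one_div_nat_add_one_pow {s : ℕ} (hs : 2 ≤ s) :
    Summable fun n : ℕ => 1 / ((n : ℝ) + 1) ^ s := by
  simpa using (summable_nat_add_iff 1).2 (Real.summable_one_div_nat_pow.2 hs)

lemma norm_pow_succ_div_le {s : ℕ} {z : ℝ} (hz : |z| ≤ 1) (n : ℕ) :
    ‖z ^ (n + 1) / ((n : ℝ) + 1) ^ s‖ ≤ 1 / ((n : ℝ) + 1) ^ s := by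
  rw [norm_div, norm_pow, Real.norm_eq_abs, Real.norm_of_nonneg (by positivity)]
  gcongr
  exact pow_le_one₀ (abs_nonneg z) hz

lemma summable_polylog {s : ℕ} (hs : 2 ≤ s) {z : ℝ} (hz : |z| ≤ 1) :
    Summable fun n : ℕ => z ^ (n + 1) / ((n : ℝ) + 1) ^ s :=
  .of_norm_bounded (summable_one_div_nat_add_one_pow hs) (norm_pow_succ_div_le hz)

lemma continuousOn_polylog {s : ℕ} (hs : 2 ≤ s) : ContinuousOn (polylog s) (Icc (-1) 1) :=
  continuousOn_tsum (fun _ => (continuous_pow _).continuousOn.div_const _)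
    (summable_one_div_nat_add_one_pow hs) fun n _ hz => norm_pow_succ_div_le (abs_le.2 hz) n

lemma ContinuousOn.polylog {s : ℕ} (hs : 2 ≤ s) {t : Set ℝ} {f : ℝ → ℝ} (hf : ContinuousOn f t)
    (hft : MapsTo f t (Icc (-1) 1)) : ContinuousOn (fun x => _root_.polylog s (f x)) t :=
  (continuousOn_polylog hs).comp hf hft

lemma polylog_one_eq_neg_log {z : ℝ} (hz : |z| < 1) : polylog 1 z = -log (1 - z) := by
  simpa [polylog] using (hasSum_pow_div_log_of_abs_lt_one hz).tsum_eq

/-- Termwise differentiation on `(-r, r)` with `r = (|y| + 1) / 2 < 1`, where the differentiated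
series is dominated by `rⁿ`. -/
lemma hasDerivAt_polylog_succ (s : ℕ) {y : ℝ} (hy : |y| < 1) (hy0 : y ≠ 0) :
    HasDerivAt (polylog (s + 1)) (polylog s y / y) y := by
  set r := (|y| + 1) / 2 with hr
  have hr0 : 0 ≤ r := by positivity
  have hr1 : r < 1 := by linarith
  have hyr : y ∈ Ioo (-r) r := abs_lt.1 (by linarith)
  have hterm : ∀ (n : ℕ) (z : ℝ), HasDerivAt (fun z => z ^ (n + 1) / ((n : ℝ) + 1) ^ (s + 1))
      (z ^ n / ((n : ℝ) + 1) ^ s) z := fun n z => by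
    refine ((hasDerivAt_pow (n + 1) z).div_const _).congr_deriv ?_
    rw [Nat.add_sub_cancel, Nat.cast_succ, pow_succ]
    field_simp
  have hD := hasDerivAt_tsum_of_isPreconnected (summable_geometric_of_lt_one hr0 hr1) isOpen_Ioo
    isPreconnected_Ioo (fun n z _ => hterm n z) (fun n z hz => ?_) (y₀ := 0)
    (by simp [show (0:ℝ) < r by positivity]) (by simp) hyr
  · have hsum : polylog s y / y = ∑' n : ℕ, y ^ n / ((n : ℝ) + 1) ^ s := by
      rw [div_eq_iff hy0, polylog, ← tsum_mul_right]
      congr 1 with n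
      ring
    rw [hsum]
    exact hD
  · rw [norm_div, norm_pow, Real.norm_eq_abs, Real.norm_of_nonneg (by positivity)]
    calc |z| ^ n / ((n : ℝ) + 1) ^ s ≤ |z| ^ n :=
          div_le_self (by positivity) (one_le_pow₀ (by simp))
      _ ≤ r ^ n := pow_le_pow_left₀ (abs_nonneg z) (abs_le.2 ⟨hz.1.le, hz.2.le⟩) n

lemma HasDerivAt.polylog_succ (s : ℕ) {f : ℝ → ℝ} {f' x : ℝ} (hf : HasDerivAt f f' x)
    (hx : |f x| < 1) (hx0 : f x ≠ 0) :
    HasDerivAt (fun y => polylog (s + 1) (f y)) (polylog s (f x) / f x * f') x :=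
  (hasDerivAt_polylog_succ s hx hx0).comp x hf

lemma polylog_two_one : polylog 2 1 = π ^ 2 / 6 := by
  rw [polylog_one_right, ← hasSum_zeta_two.tsum_eq, hasSum_zeta_two.summable.tsum_eq_zero_add]
  simp

/-- The terms with odd denominator cancel, and those with denominator `2m` add up to
`2 / (2m)ˢ`. -/
lemma polylog_neg_one_add_polylog_one {s : ℕ} (hs : 2 ≤ s) :
    polylog s (-1) + polylog s 1 = 2 / 2 ^ s * polylog s 1 := by
  have hsum := summable_one_div_nat_add_one_pow hs
  set h : ℕ → ℝ := fun n => (-1) ^ (n + 1) / ((n : ℝ) + 1) ^ s + 1 / ((n : ℝ) + 1) ^ s with hh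
  have h_even : ∀ k : ℕ, h (2 * k) = 0 := fun k => by
    simp only [hh, Odd.neg_one_pow (odd_two_mul_add_one k)]
    ring
  have h_odd : ∀ k : ℕ, h (2 * k + 1) = 2 / 2 ^ s * (1 / ((k : ℝ) + 1) ^ s) := fun k => by
    have h2k : ((2 * k + 1 : ℕ) : ℝ) + 1 = 2 * ((k : ℝ) + 1) := by push_cast; ring
    simp only [hh, h2k, Even.neg_one_pow (⟨k + 1, by ring⟩ : Even (2 * k + 1 + 1)), mul_pow]
    field_simp
    ring
  calc polylog s (-1) + polylog s 1 = ∑' n, h n := by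
        rw [polylog_one_right, polylog, ← (summable_polylog hs (by simp)).tsum_add hsum]
    _ = 2 / 2 ^ s * polylog s 1 := by
        rw [← tsum_even_add_odd (by simp [h_even, summable_zero])
          (by simpa only [h_odd] using hsum.mul_left _)]
        simp only [h_even, h_odd, tsum_zero, zero_add, tsum_mul_left, polylog_one_right]

lemma constant_of_hasDerivAt_zero {f : ℝ → ℝ} {a b : ℝ} (hf : ContinuousOn f (Icc a b))
    (hf' : ∀ x ∈ Ioo a b, HasDerivAt f 0 x) : ∀ x ∈ Icc a b, f x = f a := by
  intro x hx
  have := intervalIntegral.integral_eq_sub_of_hasDerivAt_of_le hx.1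
    (hf.mono (Icc_subset_Icc_right hx.2)) (fun y hy => hf' y ⟨hy.1, hy.2.trans_le hx.2⟩)
    intervalIntegrable_const
  simpa [sub_eq_zero, eq_comm] using this

/-- At `0` this follows from `0 ≤ log (1 + x) ≤ x` and `x log x → 0`. -/
lemma continuousOn_log_one_add_mul_log : ContinuousOn (fun x => log (1 + x) * log x) (Ici 0) := by
  intro x hx
  rcases (mem_Ici.1 hx).eq_or_lt with rfl | hx0
  · have hbound : ∀ y ∈ Ici (0 : ℝ), ‖log (1 + y) * log y‖ ≤ ‖y * log y‖ := fun y hy => by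
      rw [norm_mul, norm_mul, Real.norm_of_nonneg (log_nonneg (by linarith [mem_Ici.1 hy])),
        Real.norm_of_nonneg (mem_Ici.1 hy)]
      gcongr
      linarith [log_le_sub_one_of_pos (show 0 < 1 + y by linarith [mem_Ici.1 hy])]
    have hlim : Tendsto (fun y => y * log y) (𝓝[Ici 0] 0) (𝓝 0) := by
      simpa using (continuous_mul_log.tendsto 0).mono_left nhdsWithin_le_nhds
    simpa [ContinuousWithinAt] using
      squeeze_zero_norm' (eventually_nhdsWithin_of_forall hbound) (tendsto_norm_zero.comp hlim)
  · exact ContinuousAt.continuousWithinAt (by fun_prop (disch := positivity))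

lemma continuousOn_log_one_add : ContinuousOn (fun x => log (1 + x)) (Icc 0 1) := by
  fun_prop (disch := intro x hx; have := hx.1; positivity)

section UnitInterval

variable {s : ℕ} {x : ℝ}

lemma continuousOn_polylog_neg (hs : 2 ≤ s) : ContinuousOn (fun x => polylog s (-x)) (Icc 0 1) :=
  continuousOn_neg.polylog hs fun x hx => ⟨by linarith [hx.2], by linarith [hx.1]⟩

lemma continuousOn_polylog_div_one_add (hs : 2 ≤ s) :
    ContinuousOn (fun x => polylog s (x / (1 + x))) (Icc 0 1) := by
  refine ContinuousOn.polylog hs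
    (continuousOn_id.div (by fun_prop) fun x hx => by linarith [hx.1]) fun x hx => ?_
  have hx0 := hx.1
  exact ⟨by linarith [show 0 ≤ x / (1 + x) by positivity],
    (div_le_one (by positivity)).2 (by linarith)⟩

lemma continuousOn_polylog_inv_one_add (hs : 2 ≤ s) :
    ContinuousOn (fun x => polylog s (1 + x)⁻¹) (Icc 0 1) := by
  refine ContinuousOn.polylog hs
    (ContinuousOn.inv₀ (f := fun x => 1 + x) (by fun_prop) fun x hx => by linarith [hx.1])
    fun x hx => ?_
  have hx0 := hx.1
  exact ⟨by linarith [show 0 ≤ (1 + x)⁻¹ by positivity], inv_le_one_of_one_le₀ (by linarith)⟩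

lemma polylog_one_neg (hx0 : 0 ≤ x) (hx1 : x < 1) : polylog 1 (-x) = -log (1 + x) := by
  rw [polylog_one_eq_neg_log (by rw [abs_neg, abs_of_nonneg hx0]; exact hx1), sub_neg_eq_add]

lemma polylog_one_div_one_add (hx0 : 0 ≤ x) : polylog 1 (x / (1 + x)) = log (1 + x) := by
  have hx1 : x / (1 + x) < 1 := (div_lt_one (by positivity)).2 (by linarith)
  rw [polylog_one_eq_neg_log (abs_lt.2 ⟨by linarith [show 0 ≤ x / (1 + x) by positivity], hx1⟩),
    show 1 - x / (1 + x) = (1 + x)⁻¹ by field_simp; ring, log_inv, neg_neg]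

lemma polylog_one_inv_one_add (hx0 : 0 < x) : polylog 1 (1 + x)⁻¹ = log (1 + x) - log x := by
  have hx1 : (1 + x)⁻¹ < 1 := inv_lt_one_of_one_lt₀ (by linarith)
  rw [polylog_one_eq_neg_log (abs_lt.2 ⟨by linarith [show 0 < (1 + x)⁻¹ by positivity], hx1⟩),
    show 1 - (1 + x)⁻¹ = x / (1 + x) by field_simp; ring, log_div hx0.ne' (by positivity)]
  ring

lemma hasDerivAt_polylog_succ_neg (s : ℕ) (hx0 : 0 < x) (hx1 : x < 1) :
    HasDerivAt (fun x => polylog (s + 1) (-x)) (polylog s (-x) / x) x := by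
  refine ((hasDerivAt_neg x).polylog_succ s ?_ (by simpa using hx0.ne')).congr_deriv ?_
  · rw [abs_neg, abs_of_pos hx0]; exact hx1
  · field_simp

lemma hasDerivAt_polylog_succ_div_one_add (s : ℕ) (hx0 : 0 < x) :
    HasDerivAt (fun x => polylog (s + 1) (x / (1 + x))) (polylog s (x / (1 + x)) / (x * (1 + x)))
      x := by
  have hD : HasDerivAt (fun x => x / (1 + x)) (1 / (1 + x) ^ 2) x := by
    refine ((hasDerivAt_id x).div ((hasDerivAt_id x).const_add 1) (by positivity)).congr_deriv ?_
    simp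
  have hx1 : x / (1 + x) < 1 := (div_lt_one (by positivity)).2 (by linarith)
  refine (hD.polylog_succ s ?_ (by positivity)).congr_deriv ?_
  · rw [abs_of_pos (by positivity)]; exact hx1
  · field_simp

lemma hasDerivAt_polylog_succ_inv_one_add (s : ℕ) (hx0 : 0 < x) :
    HasDerivAt (fun x => polylog (s + 1) (1 + x)⁻¹) (-(polylog s (1 + x)⁻¹ / (1 + x))) x := by
  have hD : HasDerivAt (fun x => (1 + x)⁻¹) (-(1 / (1 + x) ^ 2)) x := by
    refine (((hasDerivAt_id x).const_add 1).inv (by positivity)).congr_deriv ?_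
    simp [neg_div]
  have hx1 : (1 + x)⁻¹ < 1 := inv_lt_one_of_one_lt₀ (by linarith)
  refine (hD.polylog_succ s ?_ (by positivity)).congr_deriv ?_
  · rw [abs_of_pos (by positivity)]; exact hx1
  · field_simp

lemma hasDerivAt_log_one_add (hx0 : 0 < x) : HasDerivAt (fun x => log (1 + x)) (1 / (1 + x)) x :=
  ((hasDerivAt_id x).const_add 1).log (by positivity)

lemma polylog_two_landen (hx : x ∈ Icc 0 1) :
    polylog 2 (x / (1 + x)) + polylog 2 (-x) = -(log (1 + x) ^ 2 / 2) := by
  have h := constant_of_hasDerivAt_zero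
    (f := fun x => polylog 2 (x / (1 + x)) + polylog 2 (-x) + log (1 + x) ^ 2 / 2)
    (((continuousOn_polylog_div_one_add le_rfl).add (continuousOn_polylog_neg le_rfl)).add
      ((continuousOn_log_one_add.pow 2).div_const 2))
    (fun x ⟨hx0, hx1⟩ => by
      refine (((hasDerivAt_polylog_succ_div_one_add 1 hx0).add
        (hasDerivAt_polylog_succ_neg 1 hx0 hx1)).add
        (((hasDerivAt_log_one_add hx0).pow 2).div_const 2)).congr_deriv ?_
      rw [polylog_one_div_one_add hx0.le, polylog_one_neg hx0.le hx1]
      field_simp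
      ring) x hx
  simp only [polylog_zero_right, zero_div, neg_zero, add_zero, log_one] at h
  linarith

lemma polylog_two_reflection (hx : x ∈ Icc 0 1) :
    polylog 2 (1 + x)⁻¹ + polylog 2 (x / (1 + x)) =
      π ^ 2 / 6 + log (1 + x) * log x - log (1 + x) ^ 2 := by
  have h := constant_of_hasDerivAt_zero
    (f := fun x => polylog 2 (1 + x)⁻¹ + polylog 2 (x / (1 + x)) - log (1 + x) * log x
      + log (1 + x) ^ 2)
    ((((continuousOn_polylog_inv_one_add le_rfl).add
      (continuousOn_polylog_div_one_add le_rfl)).sub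
      (continuousOn_log_one_add_mul_log.mono Icc_subset_Ici_self)).add
      (continuousOn_log_one_add.pow 2))
    (fun x ⟨hx0, hx1⟩ => by
      refine ((((hasDerivAt_polylog_succ_inv_one_add 1 hx0).add
        (hasDerivAt_polylog_succ_div_one_add 1 hx0)).sub
        ((hasDerivAt_log_one_add hx0).mul (hasDerivAt_log hx0.ne'))).add
        ((hasDerivAt_log_one_add hx0).pow 2)).congr_deriv ?_
      rw [polylog_one_inv_one_add hx0, polylog_one_div_one_add hx0.le]
      field_simp
      ring) x hx
  simp only [add_zero, inv_one, zero_div, polylog_zero_right, log_one, zero_mul,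
    polylog_two_one] at h
  linarith

lemma polylog_three_landen (hx : x ∈ Icc 0 1) :
    polylog 3 (1 + x)⁻¹ + polylog 3 (x / (1 + x)) + polylog 3 (-x) =
      polylog 3 1 + log (1 + x) ^ 3 / 3 - π ^ 2 / 6 * log (1 + x)
        - log (1 + x) ^ 2 * log x / 2 := by
  have h := constant_of_hasDerivAt_zero
    (f := fun x => polylog 3 (1 + x)⁻¹ + polylog 3 (x / (1 + x)) + polylog 3 (-x)
      - log (1 + x) ^ 3 / 3 + π ^ 2 / 6 * log (1 + x) + log (1 + x) * (log (1 + x) * log x) / 2)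
    ((((((continuousOn_polylog_inv_one_add (by norm_num)).add
      (continuousOn_polylog_div_one_add (by norm_num))).add
      (continuousOn_polylog_neg (by norm_num))).sub
      ((continuousOn_log_one_add.pow 3).div_const 3)).add
      (continuousOn_log_one_add.const_smul (π ^ 2 / 6))).add
      ((continuousOn_log_one_add.mul
        (continuousOn_log_one_add_mul_log.mono Icc_subset_Ici_self)).div_const 2))
    (fun x ⟨hx0, hx1⟩ => by
      have hx : x ∈ Icc 0 1 := ⟨hx0.le, hx1.le⟩
      have hL := hasDerivAt_log_one_add hx0
      refine ((((((hasDerivAt_polylog_succ_inv_one_add 2 hx0).add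
        (hasDerivAt_polylog_succ_div_one_add 2 hx0)).add
        (hasDerivAt_polylog_succ_neg 2 hx0 hx1)).sub
        ((hL.pow 3).div_const 3)).add (hL.const_mul (π ^ 2 / 6))).add
        ((hL.mul (hL.mul (hasDerivAt_log hx0.ne'))).div_const 2)).congr_deriv ?_
      have h1 := polylog_two_landen hx
      have h2 := polylog_two_reflection hx
      rw [show polylog 2 (1 + x)⁻¹ = _ from eq_sub_of_add_eq h2,
        show polylog 2 (-x) = _ from eq_sub_of_add_eq' h1, Pi.mul_apply]
      field_simp
      ring) x hx
  simp only [add_zero, inv_one, zero_div, polylog_zero_right, log_one, zero_mul, mul_zero,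
    neg_zero] at h
  linarith

end UnitInterval

lemma polylog_two_neg_one : polylog 2 (-1) = -(π ^ 2 / 12) := by
  linarith [polylog_neg_one_add_polylog_one (le_refl 2), polylog_two_one]

lemma polylog_three_neg_one : polylog 3 (-1) = -(3 / 4 * polylog 3 1) := by
  linarith [polylog_neg_one_add_polylog_one (show 2 ≤ 3 by norm_num)]

lemma polylog_three_half :
    polylog 3 (1 / 2) = 7 / 8 * polylog 3 1 - π ^ 2 / 12 * log 2 + log 2 ^ 3 / 6 := by
  have h := polylog_three_landen (right_mem_Icc.2 zero_le_one)
  norm_num [polylog_three_neg_one] at h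
  linarith

lemma integral_polylog_two_neg_div_one_add :
    ∫ x in (0 : ℝ)..1, polylog 2 (-x) / (1 + x) =
      2 * polylog 3 (-1) + 2 * polylog 3 (1 / 2) - log 2 ^ 3 / 3 - log 2 * polylog 2 (-1) := by
  rw [intervalIntegral.integral_eq_sub_of_hasDerivAt_of_le zero_le_one
    (f := fun x => 2 * polylog 3 (-x) + 2 * polylog 3 (x / (1 + x)) - log (1 + x) ^ 3 / 3
      - log (1 + x) * polylog 2 (-x))]
  · norm_num [polylog_zero_right]
  · exact (((continuousOn_const.mul (continuousOn_polylog_neg (by norm_num))).add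
      (continuousOn_const.mul (continuousOn_polylog_div_one_add (by norm_num)))).sub
      ((continuousOn_log_one_add.pow 3).div_const 3)).sub
      (continuousOn_log_one_add.mul (continuousOn_polylog_neg le_rfl))
  · rintro x ⟨hx0, hx1⟩
    have hL := hasDerivAt_log_one_add hx0
    refine (((((hasDerivAt_polylog_succ_neg 2 hx0 hx1).const_mul 2).add
      ((hasDerivAt_polylog_succ_div_one_add 2 hx0).const_mul 2)).sub
      ((hL.pow 3).div_const 3)).sub
      (hL.mul (hasDerivAt_polylog_succ_neg 1 hx0 hx1))).congr_deriv ?_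
    rw [show polylog 2 (x / (1 + x)) = _ from
        eq_sub_of_add_eq (polylog_two_landen ⟨hx0.le, hx1.le⟩),
      polylog_one_neg hx0.le hx1]
    field_simp
    ring
  · exact ((continuousOn_polylog_neg le_rfl).div (by fun_prop)
      fun x hx => by linarith [hx.1]).intervalIntegrable_of_Icc zero_le_one

theorem stmt_11 :
    -(∫ x in (0:ℝ)..1, Li2 (-x) / (1 + x))
      = Real.pi ^ 2 / 12 * Real.log 2 - (∑' n : ℕ, 1 / ((n : ℝ) + 1) ^ 3) / 4 := by
  rw [Li2_eq_polylog_two, integral_polylog_two_neg_div_one_add, polylog_three_half,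
    polylog_three_neg_one, polylog_two_neg_one, polylog_one_right]
  ring
end

section
/- For |t| < 1, ∑_{n=1}^∞ (H_n^{(2)}/n) tⁿ + 2 ∑_{n=1}^∞ (H_n/n²) tⁿ = 3 Li₃(t) - Li₂(t) · ln(1-t). -/
noncomputable def harmonic' (n : ℕ) : ℝ := ∑ k ∈ Finset.range n, 1 / ((k : ℝ) + 1)
noncomputable def H2 (n : ℕ) : ℝ := ∑ k ∈ Finset.range n, 1 / ((k : ℝ) + 1) ^ 2

open Finset

theorem one_div_sq_mul_eq {K : Type*} [Field K] {a b : K} (ha : a ≠ 0) (hb : b ≠ 0)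
    (hab : a + b ≠ 0) :
    1 / (a ^ 2 * b) = 1 / ((a + b) * a ^ 2) + 1 / ((a + b) ^ 2 * a) + 1 / ((a + b) ^ 2 * b) := by
  field_simp
  ring

theorem harmonic'_succ (n : ℕ) : harmonic' (n + 1) = harmonic' n + 1 / ((n : ℝ) + 1) :=
  sum_range_succ _ n

theorem H2_succ (n : ℕ) : H2 (n + 1) = H2 n + 1 / ((n : ℝ) + 1) ^ 2 :=
  sum_range_succ _ n

theorem harmonic'_nonneg (n : ℕ) : 0 ≤ harmonic' n :=
  sum_nonneg fun _ _ => by positivity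

theorem H2_nonneg (n : ℕ) : 0 ≤ H2 n :=
  sum_nonneg fun _ _ => by positivity

theorem harmonic'_le (n : ℕ) : harmonic' n ≤ n := by
  simpa [harmonic'] using sum_le_card_nsmul (range n) (fun k : ℕ => 1 / ((k : ℝ) + 1)) 1 fun k _ =>
    div_le_one_of_le₀ (by linarith [k.cast_nonneg (α := ℝ)]) (by positivity)

theorem H2_le (n : ℕ) : H2 n ≤ n := by
  simpa [H2] using sum_le_card_nsmul (range n) (fun k : ℕ => 1 / ((k : ℝ) + 1) ^ 2) 1 fun k _ =>
    div_le_one_of_le₀ (one_le_pow₀ (by linarith [k.cast_nonneg (α := ℝ)])) (by positivity)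

theorem abs_H2_succ_div_le_one (n : ℕ) : |H2 (n + 1) / ((n : ℝ) + 1)| ≤ 1 := by
  rw [abs_of_nonneg (div_nonneg (H2_nonneg _) (by positivity))]
  exact div_le_one_of_le₀ (by exact_mod_cast H2_le (n + 1)) (by positivity)

theorem abs_harmonic'_succ_div_sq_le_one (n : ℕ) :
    |harmonic' (n + 1) / ((n : ℝ) + 1) ^ 2| ≤ 1 := by
  rw [abs_of_nonneg (div_nonneg (harmonic'_nonneg _) (by positivity))]
  refine div_le_one_of_le₀ ?_ (by positivity)
  calc harmonic' (n + 1) ≤ (n : ℝ) + 1 := by exact_mod_cast harmonic'_le (n + 1)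
    _ ≤ ((n : ℝ) + 1) ^ 2 := le_self_pow₀ (by linarith [n.cast_nonneg (α := ℝ)]) two_ne_zero

-- For n ≥ 1, the coefficient of tⁿ in the left-hand side of `stmt_16` minus `3 * Li3 t`.
noncomputable def seriesCoeff (n : ℕ) : ℝ :=
  H2 n / n + 2 * harmonic' n / (n : ℝ) ^ 2 - 3 / (n : ℝ) ^ 3

theorem seriesCoeff_one : seriesCoeff 1 = 0 := by
  norm_num [seriesCoeff, H2, harmonic']

theorem sum_antidiagonal_one_div_sq_mul (n : ℕ) :
    ∑ kl ∈ antidiagonal n, 1 / (((kl.1 : ℝ) + 1) ^ 2 * ((kl.2 : ℝ) + 1)) = seriesCoeff (n + 2) := by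
  -- The last term is written with `kl.swap` so that its sum becomes a sum over `kl.1` as well.
  have hsplit : ∀ kl ∈ antidiagonal n, 1 / (((kl.1 : ℝ) + 1) ^ 2 * ((kl.2 : ℝ) + 1))
      = 1 / ((n : ℝ) + 2) * (1 / ((kl.1 : ℝ) + 1) ^ 2)
        + 1 / ((n : ℝ) + 2) ^ 2 * (1 / ((kl.1 : ℝ) + 1))
        + 1 / ((n : ℝ) + 2) ^ 2 * (1 / ((kl.swap.1 : ℝ) + 1)) := by
    intro kl hkl
    have hN : ((kl.1 : ℝ) + 1) + ((kl.2 : ℝ) + 1) = (n : ℝ) + 2 := by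
      rw [← mem_antidiagonal.mp hkl]; push_cast; ring
    rw [one_div_sq_mul_eq (by positivity) (by positivity) (by positivity), hN]
    simp only [Prod.fst_swap, one_div_mul_one_div]
  rw [sum_congr rfl hsplit, sum_add_distrib, sum_add_distrib, ← mul_sum, ← mul_sum, ← mul_sum,
    Nat.sum_antidiagonal_swap (f := fun kl => 1 / ((kl.1 : ℝ) + 1)),
    Nat.sum_antidiagonal_eq_sum_range_succ (fun i _ => 1 / ((i : ℝ) + 1) ^ 2),
    Nat.sum_antidiagonal_eq_sum_range_succ (fun i _ => 1 / ((i : ℝ) + 1)),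
    ← H2, ← harmonic', seriesCoeff, H2_succ (n + 1), harmonic'_succ (n + 1)]
  push_cast
  field_simp
  ring

theorem summable_norm_mul_pow_succ {a : ℕ → ℝ} {t : ℝ} (ha : ∀ n, |a n| ≤ 1) (ht : |t| < 1) :
    Summable fun n => ‖a n * t ^ (n + 1)‖ := by
  refine (summable_geometric_of_lt_one (abs_nonneg t) ht).of_nonneg_of_le
    (fun _ => norm_nonneg _) fun n => ?_
  rw [norm_mul, norm_pow, Real.norm_eq_abs, Real.norm_eq_abs]
  calc |a n| * |t| ^ (n + 1) ≤ 1 * |t| ^ n :=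
        mul_le_mul (ha n) (pow_le_pow_of_le_one (abs_nonneg t) ht.le n.le_succ)
          (by positivity) zero_le_one
    _ = |t| ^ n := one_mul _

theorem abs_inv_pow_succ_le_one (n k : ℕ) : |(((n : ℝ) + 1) ^ k)⁻¹| ≤ 1 := by
  rw [abs_inv, abs_of_pos (by positivity)]
  exact inv_le_one_of_one_le₀ (one_le_pow₀ (by linarith [n.cast_nonneg (α := ℝ)]))

theorem Li2_mul_neg_log_one_sub {t : ℝ} (ht : |t| < 1) :
    Li2 t * -Real.log (1 - t) = ∑' n : ℕ, seriesCoeff (n + 1) * t ^ (n + 1) := by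
  set f : ℕ → ℝ := fun n => t ^ (n + 1) / ((n : ℝ) + 1) ^ 2
  set g : ℕ → ℝ := fun n => t ^ (n + 1) / ((n : ℝ) + 1)
  have hf : Summable (‖f ·‖) := by
    simpa only [f, div_eq_inv_mul] using
      summable_norm_mul_pow_succ (fun n => abs_inv_pow_succ_le_one n 2) ht
  have hg : Summable (‖g ·‖) := by
    simpa only [g, div_eq_inv_mul, pow_one] using
      summable_norm_mul_pow_succ (fun n => abs_inv_pow_succ_le_one n 1) ht
  have hcoeff : ∀ n, ∑ kl ∈ antidiagonal n, f kl.1 * g kl.2 = seriesCoeff (n + 2) * t ^ (n + 2) := by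
    intro n
    rw [← sum_antidiagonal_one_div_sq_mul, sum_mul]
    refine sum_congr rfl fun kl hkl => ?_
    rw [← mem_antidiagonal.mp hkl]
    simp only [f, g, div_mul_div_comm]
    ring
  have hsummable : Summable fun n => seriesCoeff (n + 2) * t ^ (n + 2) := by
    simpa only [hcoeff] using (summable_norm_sum_mul_antidiagonal_of_summable_norm hf hg).of_norm
  rw [Li2, ← (Real.hasSum_pow_div_log_of_abs_lt_one ht).tsum_eq,
    tsum_mul_tsum_eq_tsum_sum_antidiagonal_of_summable_norm hf hg,
    tsum_eq_zero_add' (f := fun n => seriesCoeff (n + 1) * t ^ (n + 1)) hsummable,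
    seriesCoeff_one, zero_mul, zero_add]
  exact tsum_congr hcoeff

theorem stmt_16 (t : ℝ) (ht : |t| < 1) :
    (∑' n : ℕ, H2 (n + 1) / ((n : ℝ) + 1) * t ^ (n + 1))
      + 2 * ∑' n : ℕ, harmonic' (n + 1) / ((n : ℝ) + 1) ^ 2 * t ^ (n + 1)
      = 3 * Li3 t - Li2 t * Real.log (1 - t) := by
  have hH2 := (summable_norm_mul_pow_succ abs_H2_succ_div_le_one ht).of_norm
  have hharmonic := (summable_norm_mul_pow_succ abs_harmonic'_succ_div_sq_le_one ht).of_norm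
  have hLi3 : Summable fun n : ℕ => t ^ (n + 1) / ((n : ℝ) + 1) ^ 3 := by
    simpa only [div_eq_inv_mul] using
      (summable_norm_mul_pow_succ (fun n => abs_inv_pow_succ_le_one n 3) ht).of_norm
  have hsplit : ∑' n : ℕ, seriesCoeff (n + 1) * t ^ (n + 1)
      = (∑' n : ℕ, H2 (n + 1) / ((n : ℝ) + 1) * t ^ (n + 1))
        + 2 * (∑' n : ℕ, harmonic' (n + 1) / ((n : ℝ) + 1) ^ 2 * t ^ (n + 1)) - 3 * Li3 t := by
    rw [Li3, ← tsum_mul_left, ← tsum_mul_left, ← hH2.tsum_add (hharmonic.mul_left 2),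
      ← (hH2.add (hharmonic.mul_left 2)).tsum_sub (hLi3.mul_left 3)]
    refine tsum_congr fun n => ?_
    simp only [seriesCoeff]
    push_cast
    ring
  linarith [Li2_mul_neg_log_one_sub ht]
end

section
/- ∑_{n=1}^∞ ((-1)^(n-1)/n) H_n⁻ = (ln 2)²/2 + π²/12, where H_n⁻ = ∑_{k=1}^n (-1)^(k-1)/k. -/
/-!
With `a n = (-1)^n / (n + 1)`, the series is `∑ a n * (a 0 + ⋯ + a n)`, whose partial sums are
`((∑ a)^2 + ∑ a^2) / 2`. The skew-harmonic numbers tend to `log 2` (on even indices they are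
`H_{2n} - H_n`), and `∑ a n ^ 2 = ∑ 1 / (n + 1)^2 = π^2 / 6`.
-/

open Filter

noncomputable def skewHarmonic (n : ℕ) : ℝ := ∑ k ∈ Finset.range n, (-1 : ℝ) ^ k / (k + 1)

open Finset Topology

theorem two_mul_sum_range_mul_sum_range_succ {R : Type*} [CommRing R] (a : ℕ → R) (N : ℕ) :
    2 * ∑ n ∈ range N, a n * ∑ k ∈ range (n + 1), a k =
      (∑ n ∈ range N, a n) ^ 2 + ∑ n ∈ range N, a n ^ 2 := by
  induction N with
  | zero => simp
  | succ N ih =>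
    rw [sum_range_succ (fun n ↦ a n * _), mul_add, ih, sum_range_succ a, sum_range_succ (a · ^ 2)]
    ring

lemma skewHarmonic_succ (n : ℕ) :
    skewHarmonic (n + 1) = skewHarmonic n + (-1) ^ n / (n + 1) :=
  sum_range_succ ..

lemma skewHarmonic_two_mul (n : ℕ) :
    skewHarmonic (2 * n) = harmonic (2 * n) - harmonic n := by
  induction n with
  | zero => simp [skewHarmonic]
  | succ n ih =>
    rw [show 2 * (n + 1) = 2 * n + 1 + 1 by ring, skewHarmonic_succ, skewHarmonic_succ, ih,
      harmonic_succ, harmonic_succ, harmonic_succ, pow_succ, (even_two_mul n).neg_one_pow]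
    push_cast
    field_simp
    ring

lemma tendsto_skewHarmonic_two_mul :
    Tendsto (fun n ↦ skewHarmonic (2 * n)) atTop (𝓝 (Real.log 2)) := by
  have hγ := Real.tendsto_harmonic_sub_log
  have h := ((hγ.comp (tendsto_id.const_mul_atTop' two_pos)).sub hγ).add_const (Real.log 2)
  rw [sub_self, zero_add] at h
  refine h.congr' ?_
  filter_upwards [eventually_ne_atTop 0] with n hn
  simp only [Function.comp_apply, id, skewHarmonic_two_mul, Nat.cast_mul, Nat.cast_ofNat]
  rw [Real.log_mul two_ne_zero (Nat.cast_ne_zero.mpr hn)]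
  ring

lemma tendsto_skewHarmonic : Tendsto skewHarmonic atTop (𝓝 (Real.log 2)) := by
  have hanti : Antitone fun n : ℕ ↦ (1 : ℝ) / (n + 1) := fun a b hab ↦
    one_div_le_one_div_of_le (by positivity) (by gcongr)
  -- the alternating series test gives some limit; the even subsequence identifies it
  obtain ⟨l, hl⟩ := hanti.tendsto_alternating_series_of_tendsto_zero
    tendsto_one_div_add_atTop_nhds_zero_nat
  simp only [mul_one_div] at hl
  change Tendsto skewHarmonic atTop (𝓝 l) at hl
  rwa [tendsto_nhds_unique (hl.comp (tendsto_id.const_mul_atTop' two_pos))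
    tendsto_skewHarmonic_two_mul] at hl

lemma hasSum_one_div_nat_succ_sq :
    HasSum (fun n : ℕ ↦ 1 / ((n : ℝ) + 1) ^ 2) (Real.pi ^ 2 / 6) := by
  simpa using (hasSum_nat_add_iff' 1).mpr hasSum_zeta_two

theorem stmt_19 :
    Tendsto (fun N => ∑ n ∈ Finset.range N, (-1 : ℝ) ^ n / (n + 1) * skewHarmonic (n + 1)) atTop
      (nhds ((Real.log 2) ^ 2 / 2 + Real.pi ^ 2 / 12)) := by
  have hsq (n : ℕ) : ((-1 : ℝ) ^ n / (n + 1)) ^ 2 = 1 / ((n : ℝ) + 1) ^ 2 := by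
    rw [div_pow, ← pow_mul, mul_comm, pow_mul, neg_one_sq, one_pow]
  have hpartial (N : ℕ) :
      ∑ n ∈ range N, (-1 : ℝ) ^ n / (n + 1) * skewHarmonic (n + 1) =
        (skewHarmonic N ^ 2 + ∑ n ∈ range N, 1 / ((n : ℝ) + 1) ^ 2) / 2 := by
    simp only [← hsq]
    rw [eq_div_iff two_ne_zero, mul_comm]
    exact two_mul_sum_range_mul_sum_range_succ (fun n : ℕ ↦ (-1 : ℝ) ^ n / (n + 1)) N
  have h := ((tendsto_skewHarmonic.pow 2).add hasSum_one_div_nat_succ_sq.tendsto_sum_nat).div_const 2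
  rw [show (Real.log 2 ^ 2 + Real.pi ^ 2 / 6) / 2 = Real.log 2 ^ 2 / 2 + Real.pi ^ 2 / 12 by ring] at h
  exact h.congr fun N ↦ (hpartial N).symm
end
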